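/- Let 𝕜 and 𝕜' be RCLike fields, let E be a finite-dimensional inner product space over 𝕜 and E' a finite-dimensional inner product space over 𝕜', and let U : Fin n → Submodule 𝕜 E and V : Fin n → Submodule 𝕜' E' both be pairwise generic. Then for every quantum-logic term t in n variables: if eval t U = ⊥ then eval t V = ⊥; if eval t U = ⊤ then eval t V = ⊤; for each i, if eval t U = U i then eval t V = V i; and for each i, if eval t U = (U i)ᗮ then eval t V = (V i)ᗮ. -/

import Mathlib

/-- A quantum-logic term in `n` variables. -/
inductive Term (n : ℕ) : Type
  | var : Fin n → Term n
  | neg : Term n → Term n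
  | inf : Term n → Term n → Term n
  | sup : Term n → Term n → Term n

/-- The value of a quantum-logic term under an assignment of subspaces
to the variables.  Negation is interpreted as orthogonal complement. -/
def Term.eval {n : ℕ} {𝕜 E : Type*} [RCLike 𝕜] [NormedAddCommGroup E]
    [InnerProductSpace 𝕜 E] : Term n → (Fin n → Submodule 𝕜 E) → Submodule 𝕜 E
  | .var i, U => U i
  | .neg t, U => (t.eval U)ᗮ
  | .inf s t, U => s.eval U ⊓ t.eval U
  | .sup s t, U => s.eval U ⊔ t.eval U

/-- A family of subspaces is pairwise generic. -/
def PairwiseGeneric {ι : Type*} {𝕜 E : Type*} [RCLike 𝕜] [NormedAddCommGroup E]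
    [InnerProductSpace 𝕜 E] (U : ι → Submodule 𝕜 E) : Prop :=
  (∀ i, U i ≠ ⊥ ∧ U i ≠ ⊤) ∧
  ∀ i j, i ≠ j →
    U i ⊓ U j = ⊥ ∧ U i ⊓ (U j)ᗮ = ⊥ ∧ (U i)ᗮ ⊓ (U j)ᗮ = ⊥

/-!
Under a pairwise generic assignment `U`, every term evaluates to `⊥`, `⊤`, some `U i` or some
`(U i)ᗮ`: these `2n + 2` subspaces are closed under `ᗮ`, `⊓` and `⊔`, and form a copy of the
ortholattice `MO_n` in which distinct `U i`, `U j` meet in `⊥` and join to `⊤` (in finite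
dimension `Kᗮᗮ = K`, so joins are complements of meets of complements). Which of them a
term evaluates to is therefore computed by a symbolic evaluation in `MO_n` that does not depend
on `U`, and genericity makes the symbolic value recoverable from the actual one.
-/

/-- The ortholattice `MO_ι`, with `var i` and `negVar i` standing for `U i` and `(U i)ᗮ`. -/
inductive GenericValue (ι : Type*) : Type _
  | bot
  | top
  | var : ι → GenericValue ι
  | negVar : ι → GenericValue ι

namespace GenericValue

variable {ι : Type*}

def compl : GenericValue ι → GenericValue ι
  | bot => top
  | top => bot
  | var i => negVar i
  | negVar i => var i

def inf [DecidableEq ι] : GenericValue ι → GenericValue ι → GenericValue ι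
  | bot, _ | _, bot => bot
  | top, a | a, top => a
  | var i, var j => if i = j then var i else bot
  | negVar i, negVar j => if i = j then negVar i else bot
  | _, _ => bot

def sup [DecidableEq ι] (a b : GenericValue ι) : GenericValue ι :=
  (a.compl.inf b.compl).compl

variable {𝕜 E : Type*} [RCLike 𝕜] [NormedAddCommGroup E] [InnerProductSpace 𝕜 E]

def interp (U : ι → Submodule 𝕜 E) : GenericValue ι → Submodule 𝕜 E
  | bot => ⊥
  | top => ⊤
  | var i => U i
  | negVar i => (U i)ᗮ

end GenericValue

namespace PairwiseGeneric

variable {ι 𝕜 E : Type*} [RCLike 𝕜] [NormedAddCommGroup E] [InnerProductSpace 𝕜 E]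
  {U : ι → Submodule 𝕜 E}

theorem ne_bot (hU : PairwiseGeneric U) (i : ι) : U i ≠ ⊥ := (hU.1 i).1

theorem ne_top (hU : PairwiseGeneric U) (i : ι) : U i ≠ ⊤ := (hU.1 i).2

theorem inf_eq_bot (hU : PairwiseGeneric U) {i j : ι} (hij : i ≠ j) : U i ⊓ U j = ⊥ :=
  (hU.2 i j hij).1

theorem orthogonal_inf_orthogonal_eq_bot (hU : PairwiseGeneric U) {i j : ι} (hij : i ≠ j) :
    (U i)ᗮ ⊓ (U j)ᗮ = ⊥ :=
  (hU.2 i j hij).2.2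

theorem inf_orthogonal_eq_bot (hU : PairwiseGeneric U) (i j : ι) : U i ⊓ (U j)ᗮ = ⊥ := by
  obtain rfl | hij := eq_or_ne i j
  · exact (U i).inf_orthogonal_eq_bot
  · exact (hU.2 i j hij).2.1

theorem orthogonal_inf_eq_bot (hU : PairwiseGeneric U) (i j : ι) : (U i)ᗮ ⊓ U j = ⊥ := by
  rw [inf_comm, hU.inf_orthogonal_eq_bot]

theorem bot_ne_top [Nonempty ι] (hU : PairwiseGeneric U) : (⊥ : Submodule 𝕜 E) ≠ ⊤ := by
  intro h
  obtain ⟨i⟩ := ‹Nonempty ι›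
  exact hU.ne_bot i (eq_bot_iff.2 (h ▸ le_top))

theorem ne_orthogonal (hU : PairwiseGeneric U) (i j : ι) : U i ≠ (U j)ᗮ := fun h =>
  hU.ne_bot i (by simpa [h] using hU.inf_orthogonal_eq_bot i j)

theorem injective (hU : PairwiseGeneric U) : Function.Injective U := by
  intro i j h
  by_contra hij
  exact hU.ne_bot i (by simpa [h] using hU.inf_eq_bot hij)

theorem orthogonal_ne_top (hU : PairwiseGeneric U) (i : ι) : (U i)ᗮ ≠ ⊤ :=
  (Submodule.orthogonal_eq_top_iff _).not.2 (hU.ne_bot i)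

variable [FiniteDimensional 𝕜 E]

theorem orthogonal_ne_bot (hU : PairwiseGeneric U) (i : ι) : (U i)ᗮ ≠ ⊥ :=
  Submodule.orthogonal_eq_bot_iff.not.2 (hU.ne_top i)

theorem orthogonal_injective (hU : PairwiseGeneric U) : Function.Injective fun i => (U i)ᗮ := by
  intro i j (h : (U i)ᗮ = (U j)ᗮ)
  by_contra hij
  exact hU.orthogonal_ne_bot i (by simpa [h] using hU.orthogonal_inf_orthogonal_eq_bot hij)

end PairwiseGeneric

namespace GenericValue

variable {ι 𝕜 E : Type*} [RCLike 𝕜] [NormedAddCommGroup E] [InnerProductSpace 𝕜 E]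
  [FiniteDimensional 𝕜 E] {U : ι → Submodule 𝕜 E}

theorem interp_compl (a : GenericValue ι) : a.compl.interp U = (a.interp U)ᗮ := by
  cases a <;> simp [compl, interp, Submodule.orthogonal_orthogonal]

theorem interp_injective [Nonempty ι] (hU : PairwiseGeneric U) :
    Function.Injective (interp U : GenericValue ι → Submodule 𝕜 E) := by
  intro a b h
  cases a <;> cases b <;> simp only [interp, var.injEq, negVar.injEq] at h ⊢
  all_goals grind [hU.bot_ne_top, hU.ne_bot, hU.ne_top, hU.orthogonal_ne_bot,
    hU.orthogonal_ne_top, hU.ne_orthogonal, hU.injective.eq_iff, hU.orthogonal_injective.eq_iff]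

variable [DecidableEq ι]

omit [FiniteDimensional 𝕜 E] in
theorem interp_inf (hU : PairwiseGeneric U) (a b : GenericValue ι) :
    (a.inf b).interp U = a.interp U ⊓ b.interp U := by
  cases a <;> cases b <;>
    simp only [inf, interp, hU.inf_orthogonal_eq_bot, hU.orthogonal_inf_eq_bot, bot_inf_eq,
      inf_bot_eq, top_inf_eq, inf_top_eq]
  all_goals
    split_ifs with hij
    · rw [hij, inf_idem]
    · simp [hU.inf_eq_bot hij, hU.orthogonal_inf_orthogonal_eq_bot hij]

theorem interp_sup (hU : PairwiseGeneric U) (a b : GenericValue ι) :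
    (a.sup b).interp U = a.interp U ⊔ b.interp U := by
  rw [sup, interp_compl, interp_inf hU, interp_compl, interp_compl, Submodule.inf_orthogonal,
    Submodule.orthogonal_orthogonal]

end GenericValue

open GenericValue in
def Term.evalGeneric {n : ℕ} : Term n → GenericValue (Fin n)
  | .var i => .var i
  | .neg t => t.evalGeneric.compl
  | .inf s t => s.evalGeneric.inf t.evalGeneric
  | .sup s t => s.evalGeneric.sup t.evalGeneric

theorem Term.eval_eq_interp_evalGeneric {n : ℕ} {𝕜 E : Type*} [RCLike 𝕜] [NormedAddCommGroup E]
    [InnerProductSpace 𝕜 E] [FiniteDimensional 𝕜 E] {U : Fin n → Submodule 𝕜 E}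
    (hU : PairwiseGeneric U) (t : Term n) : t.eval U = t.evalGeneric.interp U := by
  induction t with
  | var i => rfl
  | neg t ih => rw [eval, evalGeneric, GenericValue.interp_compl, ih]
  | inf s t ihs iht => rw [eval, evalGeneric, GenericValue.interp_inf hU, ihs, iht]
  | sup s t ihs iht => rw [eval, evalGeneric, GenericValue.interp_sup hU, ihs, iht]

theorem Term.nonempty_fin {n : ℕ} : Term n → Nonempty (Fin n)
  | .var i => ⟨i⟩
  | .neg t | .inf t _ | .sup t _ => t.nonempty_fin

theorem eval_transfer_of_pairwiseGeneric {n : ℕ} {𝕜 𝕜' E E' : Type*}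
    [RCLike 𝕜] [NormedAddCommGroup E] [InnerProductSpace 𝕜 E] [FiniteDimensional 𝕜 E]
    [RCLike 𝕜'] [NormedAddCommGroup E'] [InnerProductSpace 𝕜' E'] [FiniteDimensional 𝕜' E']
    (U : Fin n → Submodule 𝕜 E) (V : Fin n → Submodule 𝕜' E')
    (hU : PairwiseGeneric U) (hV : PairwiseGeneric V) (t : Term n) :
    (t.eval U = ⊥ → t.eval V = ⊥) ∧
    (t.eval U = ⊤ → t.eval V = ⊤) ∧
    (∀ i, t.eval U = U i → t.eval V = V i) ∧
    (∀ i, t.eval U = (U i)ᗮ → t.eval V = (V i)ᗮ) := by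
  have := t.nonempty_fin
  have transfer (a : GenericValue (Fin n)) (h : t.eval U = a.interp U) :
      t.eval V = a.interp V := by
    rw [t.eval_eq_interp_evalGeneric hU] at h
    rw [t.eval_eq_interp_evalGeneric hV, GenericValue.interp_injective hU h]
  exact ⟨transfer .bot, transfer .top, fun i => transfer (.var i), fun i => transfer (.negVar i)⟩
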